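/- Let G = G₁ *_K G₂ be an amalgamated product with K infinite and β₁^{(2)}(K) = 0, where G₁, G₂ are finitely generated, and suppose RG(Gⱼ, (Gⱼ ∩ N_i)) = β₁^{(2)}(Gⱼ) for j = 1,2 for a normal chain (N_i) in G with trivial intersection. Then RG(G, (N_i)) = β₁^{(2)}(G) = β₁^{(2)}(G₁) + β₁^{(2)}(G₂). -/

import Mathlib

open Monoid Filter

/-- `ngen G` is `d(G)`, the minimal number of generators of the group `G`. -/
noncomputable def ngen (G : Type*) [Group G] : ℕ :=
  sInf {n | ∃ S : Finset G, S.card = n ∧ Subgroup.closure (S : Set G) = ⊤}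

/-- The two-element family `A, B` of groups, indexed by `Bool`. -/
abbrev Fam (A B : Type u) : Bool → Type u := fun b => bif b then A else B

instance famGroup {A B : Type u} [Group A] [Group B] : ∀ b, Group (Fam A B b) := fun b =>
  match b with
  | true => ‹Group A›
  | false => ‹Group B›

/-- The pair of homomorphisms `f : C →* A`, `g : C →* B` as a family over `Bool`, so that
`Monoid.PushoutI (fam2 f g)` is the amalgamated free product `A *_C B`. -/
abbrev fam2 {A B : Type u} {C : Type v} [Group A] [Group B] [Group C]
    (f : C →* A) (g : C →* B) : ∀ b, C →* Fam A B b := fun b =>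
  match b with
  | true => f
  | false => g

open Subgroup Topology
open scoped Pointwise

/-!
The lower bound `β₁⁽²⁾(G) ≤ RG(G, (Nᵢ))` is assumed, and since `G₁`, `G₂`, `K` are infinite the
amalgam formula reads `β₁⁽²⁾(G) = β₁⁽²⁾(G₁) + β₁⁽²⁾(G₂)`. For the upper bound write `G = A ⊔ B`
with `C ≤ A ⊓ B`, and let `N` be normal of finite index. As for the action of `N` on the
Bass–Serre tree, `N` is generated by the conjugates of `N ⊓ A` (resp. `N ⊓ B`) by a transversal
of `G ⧸ (N ⊔ A)` (resp. `G ⧸ (N ⊔ B)`) together with one element per coset of `N ⊔ C`, so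
`d(N) ≤ [G : N ⊔ A] d(N ⊓ A) + [G : N ⊔ B] d(N ⊓ B) + [G : N ⊔ C]`.
Dividing by `[G : N] = [A : N ⊓ A] [G : N ⊔ A]` bounds `d(N) / [G : N]` by the corresponding
quotients for `A` and `B` plus `1 / [C : N ⊓ C]`, which tends to `0` because `C` is infinite.
The rank gradient `RG(G, (Nᵢ))` exists because `d(Nᵢ) / [G : Nᵢ]` is antitone by Schreier's
bound.
-/

theorem ngen_eq_rank (G : Type*) [Group G] [Group.FG G] : ngen G = Group.rank G := by
  obtain ⟨S, hS, hcl⟩ := Nat.sInf_mem (s := {n | ∃ S : Finset G, S.card = n ∧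
    closure (S : Set G) = ⊤}) ⟨_, Group.rank_spec G⟩
  exact le_antisymm (Nat.sInf_le (Group.rank_spec G)) ((Group.rank_le hcl).trans hS.le)

theorem ngen_le_nat_card_of_closure_eq {G : Type*} [Group G] {N : Subgroup G} {S : Set G}
    [Finite S] (h : closure S = N) : ngen N ≤ Nat.card S := by
  subst h
  rw [ngen_eq_rank]
  exact rank_closure_finite_le_nat_card S

theorem exists_finset_card_eq_ngen_subgroupOf {G : Type*} [Group G] (N A : Subgroup G)
    [Group.FG (N.subgroupOf A)] :
    ∃ F : Finset G, F.card = ngen (N.subgroupOf A) ∧ closure (F : Set G) = N ⊓ A := by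
  classical
  obtain ⟨S, hS, hcl⟩ := Group.rank_spec (N.subgroupOf A)
  refine ⟨S.image (A.subtype.comp (N.subgroupOf A).subtype), ?_, ?_⟩
  · have hinj : Function.Injective (A.subtype.comp (N.subgroupOf A).subtype) :=
      A.subtype_injective.comp (subtype_injective _)
    rw [Finset.card_image_of_injective _ hinj, hS, ngen_eq_rank]
  · rw [Finset.coe_image, ← MonoidHom.map_closure, hcl, ← MonoidHom.range_eq_map,
      MonoidHom.range_comp, range_subtype, subgroupOf_map_subtype]

theorem Subgroup.tendsto_index_atTop {G : Type*} [Group G] [Infinite G] {P : ℕ → Subgroup G}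
    (hP : Antitone P) [∀ i, (P i).FiniteIndex] (hbot : ⨅ i, P i = ⊥) :
    Tendsto (fun i => (P i).index) atTop atTop := by
  have hgrow : ∀ i, ∃ j, (P i).index < (P j).index := by
    intro i
    have hne : P i ≠ ⊥ := by
      intro h
      have := (P i).index_ne_zero_of_finite
      rw [h, index_bot, Nat.card_eq_zero_of_infinite] at this
      exact this rfl
    obtain ⟨x, hx1⟩ := ne_bot_iff_exists_ne_one.mp hne
    obtain ⟨j, hj⟩ : ∃ j, (x : G) ∉ P j := by
      by_contra! h
      have : (x : G) ∈ ⨅ i, P i := mem_iInf.mpr h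
      rw [hbot, mem_bot] at this
      exact hx1 (Subtype.ext this)
    refine ⟨max i j, index_strictAnti (lt_of_le_of_ne (hP (le_max_left i j)) fun h => hj ?_)⟩
    exact hP (le_max_right i j) (by rw [h]; exact x.2)
  refine tendsto_atTop_atTop_of_monotone (fun i j hij => index_antitone (hP hij)) fun b => ?_
  induction b with
  | zero => exact ⟨0, Nat.zero_le _⟩
  | succ b ih =>
    obtain ⟨i, hi⟩ := ih
    obtain ⟨j, hj⟩ := hgrow i
    exact ⟨j, by omega⟩

theorem Subgroup.tendsto_relIndex_atTop {G : Type*} [Group G] {P : ℕ → Subgroup G}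
    (K : Subgroup G) [Infinite K] (hP : Antitone P) [∀ i, (P i).FiniteIndex]
    (hbot : ⨅ i, P i = ⊥) : Tendsto (fun i => ((P i).relIndex K : ℝ)) atTop atTop := by
  refine tendsto_natCast_atTop_atTop.comp (tendsto_index_atTop (P := fun i => (P i).subgroupOf K)
    (fun i j hij => subgroupOf_mono K (hP hij)) ?_)
  change ⨅ i, (P i).comap K.subtype = ⊥
  rw [← comap_iInf, hbot]
  exact bot_subgroupOf (H := K)

theorem ngen_div_index_le_of_le {G : Type*} [Group G] [Group.FG G] {H K : Subgroup G}
    (hHK : H ≤ K) [H.FiniteIndex] : (ngen H : ℝ) / H.index ≤ ngen K / K.index := by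
  have := Subgroup.finiteIndex_of_le hHK
  have hrank : ngen H ≤ H.relIndex K * ngen K := by
    rw [ngen_eq_rank, ngen_eq_rank, ← Group.rank_congr (subgroupOfEquivOfLe hHK)]
    exact rank_le_index_mul_rank (H.subgroupOf K)
  have hrel : (H.relIndex K : ℝ) ≠ 0 :=
    Nat.cast_ne_zero.mpr (FiniteIndex.index_ne_zero (H := H.subgroupOf K))
  rw [← relIndex_mul_index hHK, Nat.cast_mul]
  calc (ngen H : ℝ) / (H.relIndex K * K.index)
      ≤ (H.relIndex K * ngen K) / (H.relIndex K * K.index) := by gcongr; exact_mod_cast hrank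
    _ = ngen K / K.index := mul_div_mul_left _ _ hrel

theorem tendsto_sub_one_div_iff {ι : Type*} {l : Filter ι} {x n : ι → ℝ} {a : ℝ}
    (hn : Tendsto n l atTop) :
    Tendsto (fun i => (x i - 1) / n i) l (𝓝 a) ↔ Tendsto (fun i => x i / n i) l (𝓝 a) := by
  have h0 := hn.inv_tendsto_atTop
  have e : ∀ i, (x i - 1) / n i = x i / n i - (n i)⁻¹ := fun i => by rw [sub_div, one_div]
  simp only [e]
  exact ⟨fun h => by simpa using h.add h0, fun h => by simpa using h.sub h0⟩

section Transversal

variable {G : Type*} [Group G] {N H D : Subgroup G} [N.Normal]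

theorem QuotientGroup.mk_mul_mul_of_mem_of_mem {n d : G} (hn : n ∈ N) (hd : d ∈ D) (t : G) :
    ((n * t * d : G) : G ⧸ (N ⊔ D)) = t := by
  refine QuotientGroup.eq.mpr ?_
  rw [show (n * t * d)⁻¹ * t = d⁻¹ * (t⁻¹ * n⁻¹ * t⁻¹⁻¹) by group]
  exact mul_mem (mem_sup_right (inv_mem hd)) (mem_sup_left (‹N.Normal›.conj_mem _ (inv_mem hn) _))

theorem exists_mul_mul_eq_of_mk_eq {t g : G} (h : (t : G ⧸ (N ⊔ D)) = g) :
    ∃ n ∈ N, ∃ d ∈ D, n * t * d = g := by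
  have hmem : t⁻¹ * g ∈ ((N ⊔ D : Subgroup G) : Set G) := QuotientGroup.eq.mp h
  rw [normal_mul] at hmem
  obtain ⟨n, hn, d, hd, hnd⟩ := hmem
  dsimp only at hnd
  refine ⟨t * n * t⁻¹, ‹N.Normal›.conj_mem n hn t, d, hd, ?_⟩
  rw [inv_mul_cancel_right, mul_assoc, hnd, mul_inv_cancel_left]

theorem mul_mem_mul_subgroup_iff {s : Set G} {g d : G} (hd : d ∈ D) :
    g * d ∈ s * (D : Set G) ↔ g ∈ s * (D : Set G) := by
  constructor
  · rintro ⟨x, hx, d', hd', hxd⟩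
    dsimp only at hxd
    exact ⟨x, hx, d' * d⁻¹, mul_mem hd' (inv_mem hd), by
      show x * (d' * d⁻¹) = g
      rw [← mul_assoc, hxd, mul_inv_cancel_right]⟩
  · rintro ⟨x, hx, d', hd', rfl⟩
    exact ⟨x, hx, d' * d, mul_mem hd' hd, (mul_assoc _ _ _).symm⟩

/-- Two decompositions `n * τ x * d = n' * τ x * d'` differ by an element of
`τ x * (N ⊓ D) * (τ x)⁻¹ ⊆ H`, so whether the `N`-coordinate lies in `H` is well defined. -/
theorem mul_mem_mul_range_mul_iff {τ : G ⧸ (N ⊔ D) → G} (hHN : H ≤ N)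
    (hτ : ∀ x, (τ x : G ⧸ (N ⊔ D)) = x) (hconj : ∀ x, ∀ z ∈ N ⊓ D, τ x * z * (τ x)⁻¹ ∈ H)
    {g m : G} (hg : g ∈ (H : Set G) * Set.range τ * D) (hm : m ∈ N) :
    m * g ∈ (H : Set G) * Set.range τ * D ↔ m ∈ H := by
  obtain ⟨_, ⟨h, hh, _, ⟨x, rfl⟩, rfl⟩, d, hd, rfl⟩ := hg
  constructor
  · rintro ⟨_, ⟨h', hh', _, ⟨y, rfl⟩, rfl⟩, d', hd', heq⟩
    dsimp only at heq
    have hhN : h ∈ N := hHN hh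
    have hh'N : h' ∈ N := hHN hh'
    have hyx : y = x := by
      rw [← hτ y, ← hτ x, ← QuotientGroup.mk_mul_mul_of_mem_of_mem hh'N hd' (τ y), heq,
        show m * (h * τ x * d) = (m * h) * τ x * d by group,
        QuotientGroup.mk_mul_mul_of_mem_of_mem (mul_mem hm hhN) hd]
    subst hyx
    have hconjz : τ y * (d' * d⁻¹) * (τ y)⁻¹ = h'⁻¹ * (m * h) := by
      rw [show m * h = m * (h * τ y * d) * d⁻¹ * (τ y)⁻¹ by group, ← heq]; group
    have hz : d' * d⁻¹ ∈ N := by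
      have := ‹N.Normal›.conj_mem _ (mul_mem (inv_mem hh'N) (mul_mem hm hhN)) (τ y)⁻¹
      rwa [← hconjz, inv_inv, show (τ y)⁻¹ * (τ y * (d' * d⁻¹) * (τ y)⁻¹) * τ y = d' * d⁻¹ by
        group] at this
    have := H.mul_mem (H.mul_mem hh' (hconj y _ ⟨hz, D.mul_mem hd' (D.inv_mem hd)⟩)) (H.inv_mem hh)
    rwa [hconjz, mul_inv_cancel_left, mul_inv_cancel_right] at this
  · intro hmH
    exact ⟨_, ⟨m * h, mul_mem hmH hh, _, ⟨x, rfl⟩, rfl⟩, d, hd, by group⟩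

end Transversal

theorem mul_mem_iff_of_sup_eq_top {G : Type*} [Group G] {A B : Subgroup G} (hAB : A ⊔ B = ⊤)
    {Y : Set G} (hA : ∀ g, ∀ a ∈ A, g * a ∈ Y ↔ g ∈ Y) (hB : ∀ g, ∀ b ∈ B, g * b ∈ Y ↔ g ∈ Y)
    (g k : G) : g * k ∈ Y ↔ g ∈ Y := by
  have hk : k ∈ closure ((A : Set G) ∪ B) := by rw [← sup_eq_closure, hAB]; exact mem_top k
  induction hk using closure_induction generalizing g with
  | mem k hk => exact hk.elim (hA g k) (hB g k)
  | one => rw [mul_one]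
  | mul k k' _ _ ih ih' => rw [← mul_assoc]; exact (ih' (g * k)).trans (ih g)
  | inv k _ ih =>
    have := ih (g * k⁻¹)
    rw [inv_mul_cancel_right] at this
    exact this.symm

theorem QuotientGroup.exists_section_one {G : Type*} [Group G] (K : Subgroup G) :
    ∃ τ : G ⧸ K → G, (∀ x, (τ x : G ⧸ K) = x) ∧ τ (1 : G) = 1 := by
  classical
  refine ⟨fun x => if x = (1 : G) then 1 else x.out, fun x => ?_, if_pos rfl⟩
  dsimp only
  split_ifs with h
  · exact h.symm
  · exact QuotientGroup.out_eq' x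

theorem conj_mem_of_mem_closure {G : Type*} [Group G] {H : Subgroup G} {F : Set G} {t : G}
    (hF : ∀ y ∈ F, t * y * t⁻¹ ∈ H) {z : G} (hz : z ∈ closure F) : t * z * t⁻¹ ∈ H :=
  (closure_le (H.comap (MulAut.conj t).toMonoidHom)).mpr hF hz

section Amalgam

variable {G : Type*} [Group G] {N H A B C : Subgroup G} [N.Normal]

/-- `H * range τA * A` is the set of `g` whose `N`-coordinate in `g ∈ N * τA ḡ * A` lies in `H`.
It is right `A`-invariant, right `B`-invariant when it agrees with its `B`-analogue, hence all
of `G`; evaluating at `g ∈ N` (where `τA ḡ = 1`) gives `N ≤ H`. -/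
theorem le_of_forall_mem_mul_range_mul_iff (hAB : A ⊔ B = ⊤) (hHN : H ≤ N)
    {τA : G ⧸ (N ⊔ A) → G} (hτA : ∀ x, (τA x : G ⧸ (N ⊔ A)) = x) (hτA1 : τA (1 : G) = 1)
    (hconjA : ∀ x, ∀ z ∈ N ⊓ A, τA x * z * (τA x)⁻¹ ∈ H) {τB : G ⧸ (N ⊔ B) → G}
    (hYAB : ∀ g, g ∈ (H : Set G) * Set.range τA * A ↔ g ∈ (H : Set G) * Set.range τB * B) :
    N ≤ H := by
  have hY : ∀ g k, g * k ∈ (H : Set G) * Set.range τA * A ↔ g ∈ (H : Set G) * Set.range τA * A :=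
    mul_mem_iff_of_sup_eq_top hAB (fun g a ha => mul_mem_mul_subgroup_iff ha)
      (fun g b hb => by rw [hYAB, hYAB]; exact mul_mem_mul_subgroup_iff hb)
  have h1 : (1 : G) ∈ (H : Set G) * Set.range τA * A :=
    ⟨1, ⟨1, H.one_mem, 1, ⟨_, hτA1⟩, one_mul 1⟩, 1, A.one_mem, one_mul 1⟩
  intro w hw
  have hwH := mul_mem_mul_range_mul_iff hHN hτA hconjA h1 hw
  rw [mul_one] at hwH
  exact hwH.mp (by simpa using (hY 1 w).mpr h1)

theorem mem_mul_range_mul_iff_of_edges (hCA : C ≤ A) (hCB : C ≤ B) (hHN : H ≤ N)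
    {τA : G ⧸ (N ⊔ A) → G} (hτA : ∀ x, (τA x : G ⧸ (N ⊔ A)) = x)
    (hconjA : ∀ x, ∀ z ∈ N ⊓ A, τA x * z * (τA x)⁻¹ ∈ H)
    {τB : G ⧸ (N ⊔ B) → G} (hτB : ∀ x, (τB x : G ⧸ (N ⊔ B)) = x)
    (hconjB : ∀ x, ∀ z ∈ N ⊓ B, τB x * z * (τB x)⁻¹ ∈ H)
    {τC : G ⧸ (N ⊔ C) → G} (hτC : ∀ x, (τC x : G ⧸ (N ⊔ C)) = x)
    (hE : ∀ x, ∃ n ∈ N, n * τC x ∈ (H : Set G) * Set.range τA * A ∧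
      n * τC x ∈ (H : Set G) * Set.range τB * B) (g : G) :
    g ∈ (H : Set G) * Set.range τA * A ↔ g ∈ (H : Set G) * Set.range τB * B := by
  obtain ⟨m, hm, c, hc, hg⟩ := exists_mul_mul_eq_of_mk_eq (hτC g)
  obtain ⟨n, hn, hnA, hnB⟩ := hE g
  rw [← hg, mul_mem_mul_subgroup_iff (hCA hc), mul_mem_mul_subgroup_iff (hCB hc),
    show m * τC g = m * n⁻¹ * (n * τC g) by group,
    mul_mem_mul_range_mul_iff hHN hτA hconjA hnA (mul_mem hm (inv_mem hn)),
    mul_mem_mul_range_mul_iff hHN hτB hconjB hnB (mul_mem hm (inv_mem hn))]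

theorem closure_conj_union_edges_eq (hAB : A ⊔ B = ⊤) (hCA : C ≤ A) (hCB : C ≤ B)
    {τA : G ⧸ (N ⊔ A) → G} (hτA : ∀ x, (τA x : G ⧸ (N ⊔ A)) = x) (hτA1 : τA (1 : G) = 1)
    {τB : G ⧸ (N ⊔ B) → G} (hτB : ∀ x, (τB x : G ⧸ (N ⊔ B)) = x)
    {τC : G ⧸ (N ⊔ C) → G} (hτC : ∀ x, (τC x : G ⧸ (N ⊔ C)) = x)
    {FA FB : Set G} (hFA : closure FA = N ⊓ A) (hFB : closure FB = N ⊓ B)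
    {e : G ⧸ (N ⊔ C) → G} (heN : ∀ x, e x ∈ N)
    (he : ∀ x, ∃ n ∈ N, n * τC x ∈ Set.range τA * (A : Set G) ∧
      (e x)⁻¹ * (n * τC x) ∈ Set.range τB * (B : Set G)) :
    closure (Set.range (fun p : (G ⧸ (N ⊔ A)) × FA => τA p.1 * p.2 * (τA p.1)⁻¹) ∪
      Set.range (fun p : (G ⧸ (N ⊔ B)) × FB => τB p.1 * p.2 * (τB p.1)⁻¹) ∪ Set.range e) = N := by
  set S := Set.range (fun p : (G ⧸ (N ⊔ A)) × FA => τA p.1 * p.2 * (τA p.1)⁻¹) ∪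
      Set.range (fun p : (G ⧸ (N ⊔ B)) × FB => τB p.1 * p.2 * (τB p.1)⁻¹) ∪ Set.range e
  have hFAN : FA ⊆ N := fun y hy => (hFA ▸ Subgroup.subset_closure hy : y ∈ N ⊓ A).1
  have hFBN : FB ⊆ N := fun y hy => (hFB ▸ Subgroup.subset_closure hy : y ∈ N ⊓ B).1
  have hSN : closure S ≤ N := by
    rw [closure_le]
    rintro _ ((⟨⟨x, y, hy⟩, rfl⟩ | ⟨⟨x, y, hy⟩, rfl⟩) | ⟨x, rfl⟩)
    · exact ‹N.Normal›.conj_mem y (hFAN hy) _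
    · exact ‹N.Normal›.conj_mem y (hFBN hy) _
    · exact heN x
  have hconjA : ∀ x, ∀ z ∈ N ⊓ A, τA x * z * (τA x)⁻¹ ∈ closure S := fun x z hz =>
    conj_mem_of_mem_closure
      (fun y hy => Subgroup.subset_closure (k := S) (Or.inl (Or.inl ⟨(x, ⟨y, hy⟩), rfl⟩)))
      (by rwa [hFA])
  have hconjB : ∀ x, ∀ z ∈ N ⊓ B, τB x * z * (τB x)⁻¹ ∈ closure S := fun x z hz =>
    conj_mem_of_mem_closure
      (fun y hy => Subgroup.subset_closure (k := S) (Or.inl (Or.inr ⟨(x, ⟨y, hy⟩), rfl⟩)))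
      (by rwa [hFB])
  refine le_antisymm hSN (le_of_forall_mem_mul_range_mul_iff hAB hSN hτA hτA1 hconjA
    (mem_mul_range_mul_iff_of_edges hCA hCB hSN hτA hconjA hτB hconjB hτC fun x => ?_))
  obtain ⟨n, hn, ⟨r, hr, a, ha, hra⟩, ⟨r', hr', b, hb, hrb⟩⟩ := he x
  refine ⟨n, hn, ⟨r, ⟨1, one_mem _, r, hr, one_mul r⟩, a, ha, hra⟩, ?_⟩
  refine ⟨e x * r', ⟨e x, Subgroup.subset_closure (Or.inr ⟨x, rfl⟩), r', hr', rfl⟩, b, hb, ?_⟩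
  dsimp only at hrb ⊢
  rw [mul_assoc, hrb, mul_inv_cancel_left]

end Amalgam

theorem ngen_le_of_sup_eq_top {G : Type*} [Group G] {A B C : Subgroup G} (hAB : A ⊔ B = ⊤)
    (hCA : C ≤ A) (hCB : C ≤ B) [Group.FG A] [Group.FG B] (N : Subgroup G) [N.Normal]
    [N.FiniteIndex] :
    ngen N ≤ (N ⊔ A).index * ngen (N.subgroupOf A) + (N ⊔ B).index * ngen (N.subgroupOf B) +
      (N ⊔ C).index := by
  have (D : Subgroup G) : (N ⊔ D).FiniteIndex := finiteIndex_of_le le_sup_left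
  obtain ⟨τA, hτA, hτA1⟩ := QuotientGroup.exists_section_one (N ⊔ A)
  obtain ⟨τB, hτB, -⟩ := QuotientGroup.exists_section_one (N ⊔ B)
  obtain ⟨τC, hτC, -⟩ := QuotientGroup.exists_section_one (N ⊔ C)
  obtain ⟨FA, hFAcard, hFA⟩ := exists_finset_card_eq_ngen_subgroupOf N A
  obtain ⟨FB, hFBcard, hFB⟩ := exists_finset_card_eq_ngen_subgroupOf N B
  have hedge (x : G ⧸ (N ⊔ C)) : ∃ e ∈ N, ∃ n ∈ N, n * τC x ∈ Set.range τA * (A : Set G) ∧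
      e⁻¹ * (n * τC x) ∈ Set.range τB * (B : Set G) := by
    obtain ⟨nA, hnA, a, ha, hA⟩ := exists_mul_mul_eq_of_mk_eq (hτA (τC x))
    obtain ⟨nB, hnB, b, hb, hB⟩ := exists_mul_mul_eq_of_mk_eq (hτB (τC x))
    refine ⟨nA⁻¹ * nB, mul_mem (inv_mem hnA) hnB, nA⁻¹, inv_mem hnA,
      ⟨τA (τC x), ⟨_, rfl⟩, a, ha, ?_⟩, ⟨τB (τC x), ⟨_, rfl⟩, b, hb, ?_⟩⟩ <;> dsimp only
    · rw [eq_inv_mul_iff_mul_eq, ← mul_assoc, hA]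
    · rw [mul_inv_rev, inv_inv, mul_assoc, mul_inv_cancel_left, eq_inv_mul_iff_mul_eq,
        ← mul_assoc, hB]
  choose e heN he using hedge
  calc ngen N ≤ Nat.card _ := ngen_le_nat_card_of_closure_eq
        (closure_conj_union_edges_eq hAB hCA hCB hτA hτA1 hτB hτC hFA hFB heN he)
    _ ≤ Nat.card ((G ⧸ (N ⊔ A)) × FA) + Nat.card ((G ⧸ (N ⊔ B)) × FB) +
        Nat.card (G ⧸ (N ⊔ C)) := by
      rw [Nat.card_coe_set_eq]
      refine ((Set.ncard_union_le _ _).trans (add_le_add (Set.ncard_union_le _ _) le_rfl)).trans ?_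
      exact add_le_add (add_le_add (Finite.card_range_le _) (Finite.card_range_le _))
        (Finite.card_range_le _)
    _ = _ := by
      rw [Nat.card_prod, Nat.card_prod, Nat.card_eq_finsetCard, Nat.card_eq_finsetCard,
        ← index_eq_card, ← index_eq_card, ← index_eq_card, hFAcard, hFBcard]

theorem ngen_div_index_le_of_sup_eq_top {G : Type*} [Group G] {A B C : Subgroup G}
    (hAB : A ⊔ B = ⊤) (hCA : C ≤ A) (hCB : C ≤ B) [Group.FG A] [Group.FG B] (N : Subgroup G)
    [N.Normal] [N.FiniteIndex] :
    (ngen N : ℝ) / N.index ≤ ngen (N.subgroupOf A) / N.relIndex A +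
      ngen (N.subgroupOf B) / N.relIndex B + (N.relIndex C : ℝ)⁻¹ := by
  have hidx (D : Subgroup G) (x : ℝ) : (N ⊔ D).index * x / N.index = x / N.relIndex D := by
    have : (N ⊔ D).FiniteIndex := finiteIndex_of_le le_sup_left
    rw [← relIndex_mul_index (le_sup_left : N ≤ N ⊔ D), relIndex_sup_left, Nat.cast_mul,
      mul_comm (N.relIndex D : ℝ),
      mul_div_mul_left _ _ (Nat.cast_ne_zero.mpr index_ne_zero_of_finite)]
  calc (ngen N : ℝ) / N.index
      ≤ ((N ⊔ A).index * ngen (N.subgroupOf A) + (N ⊔ B).index * ngen (N.subgroupOf B) +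
          (N ⊔ C).index : ℕ) / N.index := by
        gcongr
        exact ngen_le_of_sup_eq_top hAB hCA hCB N
    _ = _ := by
        push_cast
        rw [add_div, add_div, hidx A, hidx B, ← mul_one ((N ⊔ C).index : ℝ), hidx C, one_div]

namespace Monoid.PushoutI

variable {ι H : Type*} {G : ι → Type*} [∀ i, Group (G i)] [Group H] {φ : ∀ i, H →* G i}

theorem range_base_le_range_of (i : ι) : (base φ).range ≤ (of (φ := φ) i).range :=
  fun _ ⟨h, hh⟩ => ⟨φ i h, (of_apply_eq_base φ i h).trans hh⟩

theorem iSup_range_of_eq_top [Nonempty ι] : ⨆ i, (of (φ := φ) i).range = ⊤ := by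
  refine (eq_top_iff' _).mpr fun x => ?_
  induction x using induction_on with
  | of i g => exact mem_iSup_of_mem i ⟨g, rfl⟩
  | base h => exact mem_iSup_of_mem (Classical.arbitrary ι) (range_base_le_range_of _ ⟨h, rfl⟩)
  | mul x y hx hy => exact mul_mem hx hy

end Monoid.PushoutI

theorem exists_tendsto_rankGradient_le_add {G : Type*} [Group G] {A B C : Subgroup G}
    (hAB : A ⊔ B = ⊤) (hCA : C ≤ A) (hCB : C ≤ B) [Group.FG A] [Group.FG B] [Infinite C]
    {N : ℕ → Subgroup G} (hN : Antitone N) [∀ i, (N i).Normal] [∀ i, (N i).FiniteIndex]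
    (hbot : ⨅ i, N i = ⊥) {a b : ℝ}
    (hA : Tendsto (fun i => ((ngen ((N i).subgroupOf A) : ℝ) - 1) / (N i).relIndex A) atTop
      (𝓝 a))
    (hB : Tendsto (fun i => ((ngen ((N i).subgroupOf B) : ℝ) - 1) / (N i).relIndex B) atTop
      (𝓝 b)) :
    ∃ L, Tendsto (fun i => ((ngen (N i) : ℝ) - 1) / (N i).index) atTop (𝓝 L) ∧ L ≤ a + b := by
  have : Infinite A := .of_injective _ (inclusion_injective hCA)
  have : Infinite B := .of_injective _ (inclusion_injective hCB)
  have : Infinite G := .of_injective _ C.subtype_injective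
  have : Group.FG G := Group.fg_def.mpr (hAB ▸
    ((Group.fg_iff_subgroup_fg A).mp inferInstance).sup
      ((Group.fg_iff_subgroup_fg B).mp inferInstance))
  have hlim : Tendsto (fun i => (ngen (N i) : ℝ) / (N i).index) atTop
      (𝓝 (⨅ i, (ngen (N i) : ℝ) / (N i).index)) :=
    tendsto_atTop_ciInf (fun i j hij => ngen_div_index_le_of_le (hN hij))
      ⟨0, by rintro _ ⟨i, rfl⟩; positivity⟩
  refine ⟨_, (tendsto_sub_one_div_iff
    (tendsto_natCast_atTop_atTop.comp (tendsto_index_atTop hN hbot))).mpr hlim, ?_⟩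
  refine le_of_tendsto_of_tendsto' hlim ?_ fun i =>
    ngen_div_index_le_of_sup_eq_top hAB hCA hCB (N i)
  simpa using (((tendsto_sub_one_div_iff (tendsto_relIndex_atTop A hN hbot)).mp hA).add
    ((tendsto_sub_one_div_iff (tendsto_relIndex_atTop B hN hbot)).mp hB)).add
    (tendsto_relIndex_atTop C hN hbot).inv_tendsto_atTop

theorem rank_gradient_amalgam_eq_l2_betti_general (β : (G : Type) → [inst : Group G] → ℝ)
    {G₁ G₂ K : Type} [Group G₁] [Group G₂] [Group K]
    [Group.FG G₁] [Group.FG G₂] [Infinite K]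
    (f : K →* G₁) (g : K →* G₂) (hf : Function.Injective f) (hg : Function.Injective g)
    (hform : β (PushoutI (fam2 f g)) =
      β G₁ - (Nat.card G₁ : ℝ)⁻¹ + β G₂ - (Nat.card G₂ : ℝ)⁻¹ + (Nat.card K : ℝ)⁻¹)
    (N : ℕ → Subgroup (PushoutI (fam2 f g)))
    (hchain : ∀ i, N (i + 1) ≤ N i) (hnorm : ∀ i, (N i).Normal)
    (hfin : ∀ i, (N i).index ≠ 0) (hint : (⨅ i, N i) = ⊥)
    (hRGge : ∀ L : ℝ,
      Tendsto (fun i => ((ngen ↥(N i) : ℝ) - 1) / ((N i).index : ℝ)) atTop (nhds L) →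
      β (PushoutI (fam2 f g)) ≤ L)
    (h1 : Tendsto (fun i =>
        ((ngen ↥((N i).subgroupOf (PushoutI.of (φ := fam2 f g) true).range) : ℝ) - 1) /
          ((N i).relIndex (PushoutI.of (φ := fam2 f g) true).range : ℝ)) atTop
        (nhds (β G₁)))
    (h2 : Tendsto (fun i =>
        ((ngen ↥((N i).subgroupOf (PushoutI.of (φ := fam2 f g) false).range) : ℝ) - 1) /
          ((N i).relIndex (PushoutI.of (φ := fam2 f g) false).range : ℝ)) atTop
        (nhds (β G₂))) :
    Tendsto (fun i => ((ngen ↥(N i) : ℝ) - 1) / ((N i).index : ℝ)) atTop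
      (nhds (β (PushoutI (fam2 f g)))) ∧
    β (PushoutI (fam2 f g)) = β G₁ + β G₂ := by
  have hφ : ∀ b, Function.Injective (fam2 f g b) := by rintro (_ | _); exacts [hg, hf]
  set A := (PushoutI.of (φ := fam2 f g) true).range
  set B := (PushoutI.of (φ := fam2 f g) false).range
  set C := (PushoutI.base (fam2 f g)).range
  have hAB : A ⊔ B = ⊤ := by
    simpa only [iSup_bool_eq] using PushoutI.iSup_range_of_eq_top (φ := fam2 f g)
  have : Infinite G₁ := .of_injective f hf
  have : Infinite G₂ := .of_injective g hg
  have : Infinite C :=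
    .of_injective _ (MonoidHom.rangeRestrict_injective_iff.mpr (PushoutI.base_injective hφ))
  have : Group.FG (Fam G₁ G₂ true) := ‹Group.FG G₁›
  have : Group.FG (Fam G₁ G₂ false) := ‹Group.FG G₂›
  have := hnorm
  have : ∀ i, (N i).FiniteIndex := fun i => ⟨hfin i⟩
  obtain ⟨L, hL, hLle⟩ := exists_tendsto_rankGradient_le_add hAB
    (PushoutI.range_base_le_range_of true) (PushoutI.range_base_le_range_of false)
    (antitone_nat_of_succ_le hchain) hint h1 h2
  have hsum : β (PushoutI (fam2 f g)) = β G₁ + β G₂ := by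
    simp [hform, Nat.card_eq_zero_of_infinite]
  obtain rfl : L = β (PushoutI (fam2 f g)) := le_antisymm (hsum ▸ hLle) (hRGge L hL)
  exact ⟨hL, hsum⟩

/-- Let `G = G₁ *_K G₂` with `K` infinite and `β₁⁽²⁾(K) = 0`, where `G₁, G₂` are finitely
generated, and suppose `RG(Gⱼ, (Gⱼ ∩ N i)) = β₁⁽²⁾(Gⱼ)` for `j = 1, 2` along a normal
chain `(N i)` of `G` with trivial intersection. Then
`RG(G, (N i)) = β₁⁽²⁾(G) = β₁⁽²⁾(G₁) + β₁⁽²⁾(G₂)`. Here `β` is an abstract first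
`L²`-Betti number, assumed to satisfy the amalgam formula for this amalgam (with
`1/|X| = 0` for `X` infinite) and the general lower-bound `RG ≥ β₁⁽²⁾`. -/
theorem rank_gradient_amalgam_eq_l2_betti (β : (G : Type) → [inst : Group G] → ℝ)
    {G₁ G₂ K : Type} [Group G₁] [Group G₂] [Group K]
    [Group.FG G₁] [Group.FG G₂] [Infinite K]
    (f : K →* G₁) (g : K →* G₂) (hf : Function.Injective f) (hg : Function.Injective g)
    (hβK : β K = 0)
    (hform : β (PushoutI (fam2 f g)) =
      β G₁ - (Nat.card G₁ : ℝ)⁻¹ + β G₂ - (Nat.card G₂ : ℝ)⁻¹ + (Nat.card K : ℝ)⁻¹)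
    (N : ℕ → Subgroup (PushoutI (fam2 f g)))
    (hchain : ∀ i, N (i + 1) ≤ N i) (hnorm : ∀ i, (N i).Normal)
    (hfin : ∀ i, (N i).index ≠ 0) (hint : (⨅ i, N i) = ⊥)
    (hRGge : ∀ L : ℝ,
      Tendsto (fun i => ((ngen ↥(N i) : ℝ) - 1) / ((N i).index : ℝ)) atTop (nhds L) →
      β (PushoutI (fam2 f g)) ≤ L)
    (h1 : Tendsto (fun i =>
        ((ngen ↥((N i).subgroupOf (PushoutI.of (φ := fam2 f g) true).range) : ℝ) - 1) /
          ((N i).relIndex (PushoutI.of (φ := fam2 f g) true).range : ℝ)) atTop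
        (nhds (β G₁)))
    (h2 : Tendsto (fun i =>
        ((ngen ↥((N i).subgroupOf (PushoutI.of (φ := fam2 f g) false).range) : ℝ) - 1) /
          ((N i).relIndex (PushoutI.of (φ := fam2 f g) false).range : ℝ)) atTop
        (nhds (β G₂))) :
    Tendsto (fun i => ((ngen ↥(N i) : ℝ) - 1) / ((N i).index : ℝ)) atTop
      (nhds (β (PushoutI (fam2 f g)))) ∧
    β (PushoutI (fam2 f g)) = β G₁ + β G₂ :=
  rank_gradient_amalgam_eq_l2_betti_general β f g hf hg hform N hchain hnorm hfin hint hRGge h1 h2
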